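/- Let C be a proper subalgebra of B_n. Then for every unary polynomial f of C with f(a) ≠ f(0), there exists some coordinate l ∈ [1,n] with f(a)(l) = 0. Consequently (b_n, c_n) ∉ Cg^C(a, 0), since b_n is nowhere 0. -/
import Mathlib


/-- The three-element set `M = {0, D, ∂D}`. -/
inductive Mc : Type
  | z : Mc
  | D : Mc
  | pD : Mc
deriving DecidableEq

/-- The fixed-point-free involution `∂` exchanging `D` and `∂D`
(its value on `0` is irrelevant to the operations below). -/
def pd : Mc → Mc
  | Mc.D => Mc.pD
  | Mc.pD => Mc.D
  | Mc.z => Mc.z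

/-- Height-1 meet on `M`: `x ∧ y = x` if `x = y`, else `0`. -/
def mmt (x y : Mc) : Mc := if x = y then x else Mc.z

/-- `J(x,y,w) = x` if `x = y`; `x ∧ w` if `x = ∂y`; `0` otherwise. -/
def mJ (x y w : Mc) : Mc := if x = y then x else if x = pd y then mmt x w else Mc.z

/-- `J'(x,y,w) = x ∧ w` if `x = y`; `x` if `x = ∂y`; `0` otherwise. -/
def mJ' (x y w : Mc) : Mc := if x = y then mmt x w else if x = pd y then x else Mc.z

/-- Pointwise meet on `M^n`. -/
def vmt {n : ℕ} (x y : Fin n → Mc) : Fin n → Mc := fun l => mmt (x l) (y l)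

/-- Pointwise `J` on `M^n`. -/
def vJ {n : ℕ} (x y w : Fin n → Mc) : Fin n → Mc := fun l => mJ (x l) (y l) (w l)

/-- Pointwise `J'` on `M^n`. -/
def vJ' {n : ℕ} (x y w : Fin n → Mc) : Fin n → Mc := fun l => mJ' (x l) (y l) (w l)

/-- The zero tuple in `M^n`. -/
def vz (n : ℕ) : Fin n → Mc := fun _ => Mc.z

/-- `b_i`: `D` in (1-indexed) coordinates `1..i`, `0` afterwards. -/
def vb (n i : ℕ) : Fin n → Mc := fun l => if l.val < i then Mc.D else Mc.z

/-- `d_i`: `D` in coordinates `1..i-1`, `∂D` in coordinate `i`, `0` afterwards. -/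
def vd (n i : ℕ) : Fin n → Mc := fun l =>
  if l.val + 1 < i then Mc.D else if l.val + 1 = i then Mc.pD else Mc.z

/-- `c_i`: `0` in coordinate `1`, `D` in coordinates `2..i`, `0` afterwards. -/
def vc (n i : ℕ) : Fin n → Mc := fun l =>
  if l.val = 0 then Mc.z else if l.val < i then Mc.D else Mc.z

/-- `a = b_1 = (D,0,…,0)`. -/
def va (n : ℕ) : Fin n → Mc := vb n 1

/-- The subuniverse `B_n` of `M^n`, generated by `{a} ∪ {b_i, d_i : 2 ≤ i ≤ n}`
under the pointwise operations `∧`, `J`, `J'`. -/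
inductive Bn (n : ℕ) : (Fin n → Mc) → Prop
  | gen_a : Bn n (va n)
  | gen_b (i : ℕ) (h2 : 2 ≤ i) (hn : i ≤ n) : Bn n (vb n i)
  | gen_d (i : ℕ) (h2 : 2 ≤ i) (hn : i ≤ n) : Bn n (vd n i)
  | cmt {x y} : Bn n x → Bn n y → Bn n (vmt x y)
  | cJ {x y w} : Bn n x → Bn n y → Bn n w → Bn n (vJ x y w)
  | cJ' {x y w} : Bn n x → Bn n y → Bn n w → Bn n (vJ' x y w)

/-- The congruence of the algebra with universe `C` (a subuniverse of `M^n`) generated by the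
pair `(a, b)`: the smallest equivalence relation on `C` containing `(a,b)` and compatible with
the operations `∧`, `J`, `J'`. -/
inductive CgC {n : ℕ} (C : (Fin n → Mc) → Prop) (a b : Fin n → Mc) :
    (Fin n → Mc) → (Fin n → Mc) → Prop
  | base : CgC C a b a b
  | refl {x} (hx : C x) : CgC C a b x x
  | symm {x y} : CgC C a b x y → CgC C a b y x
  | trans {x y z} : CgC C a b x y → CgC C a b y z → CgC C a b x z
  | cmt {x x' y y'} : CgC C a b x x' → CgC C a b y y' → CgC C a b (vmt x y) (vmt x' y')
  | cJ {x x' y y' w w'} : CgC C a b x x' → CgC C a b y y' → CgC C a b w w' →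
      CgC C a b (vJ x y w) (vJ x' y' w')
  | cJ' {x x' y y' w w'} : CgC C a b x x' → CgC C a b y y' → CgC C a b w w' →
      CgC C a b (vJ' x y w) (vJ' x' y' w')

/-- Unary polynomials of the algebra with universe `C`: functions built by composition from
the operations `∧`, `J`, `J'`, constants from `C`, and the identity. -/
inductive PolyC {n : ℕ} (C : (Fin n → Mc) → Prop) : ((Fin n → Mc) → (Fin n → Mc)) → Prop
  | id : PolyC C id
  | const {c} (h : C c) : PolyC C (fun _ => c)
  | pmt {f g} : PolyC C f → PolyC C g → PolyC C (fun x => vmt (f x) (g x))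
  | pJ {f g h} : PolyC C f → PolyC C g → PolyC C h → PolyC C (fun x => vJ (f x) (g x) (h x))
  | pJ' {f g h} : PolyC C f → PolyC C g → PolyC C h → PolyC C (fun x => vJ' (f x) (g x) (h x))

/-- Fundamental translations of the algebra with universe `C`: unary polynomials obtained from
one of the operations `∧`, `J`, `J'` by fixing all but one argument at constants from `C`. -/
inductive FT {n : ℕ} (C : (Fin n → Mc) → Prop) : ((Fin n → Mc) → (Fin n → Mc)) → Prop
  | mtL {c} (h : C c) : FT C (fun x => vmt x c)
  | mtR {c} (h : C c) : FT C (fun x => vmt c x)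
  | J1 {c d} (hc : C c) (hd : C d) : FT C (fun x => vJ x c d)
  | J2 {c d} (hc : C c) (hd : C d) : FT C (fun x => vJ c x d)
  | J3 {c d} (hc : C c) (hd : C d) : FT C (fun x => vJ c d x)
  | J'1 {c d} (hc : C c) (hd : C d) : FT C (fun x => vJ' x c d)
  | J'2 {c d} (hc : C c) (hd : C d) : FT C (fun x => vJ' c x d)
  | J'3 {c d} (hc : C c) (hd : C d) : FT C (fun x => vJ' c d x)

/-- The support of a tuple: the set of coordinates where it is nonzero. -/
def suppF {n : ℕ} (x : Fin n → Mc) : Finset (Fin n) :=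
  Finset.univ.filter (fun l => x l ≠ Mc.z)


section Aux

set_option maxHeartbeats 1000000

instance : Fintype Mc where
  elems := ⟨[Mc.z, Mc.D, Mc.pD], by decide⟩
  complete := by intro a; cases a <;> decide

lemma Pz1 : ∀ b c : Mc, mmt Mc.z b = Mc.z ∧ mJ Mc.z b c = Mc.z ∧ mJ' Mc.z b c = Mc.z := by decide

lemma Pz2 : ∀ a c : Mc, mmt a Mc.z = Mc.z ∧ mJ a Mc.z c = Mc.z ∧ mJ' a Mc.z c = Mc.z := by decide

lemma Prange : ∀ a b c : Mc, (mmt a b = a ∨ mmt a b = Mc.z) ∧ (mJ a b c = a ∨ mJ a b c = Mc.z)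
    ∧ (mJ' a b c = a ∨ mJ' a b c = Mc.z) := by decide

lemma PJw : ∀ a b c c' : Mc, a ≠ Mc.pD → b ≠ Mc.pD → mJ a b c = mJ a b c' := by decide

lemma PJ'0 : ∀ a b c c' : Mc, a ≠ Mc.pD → b ≠ Mc.pD → mJ' a b c ≠ mJ' a b c' →
    a = Mc.D ∧ b = Mc.D := by decide

lemma PJ'w : ∀ a b : Mc, mJ' a b Mc.z ≠ Mc.z →
    (a = Mc.D ∧ b = Mc.pD) ∨ (a = Mc.pD ∧ b = Mc.D) := by decide

lemma vb_eq_D {n i : ℕ} (l : Fin n) (h : l.val < i) : vb n i l = Mc.D := if_pos h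

lemma vb_eq_z {n i : ℕ} (l : Fin n) (h : ¬ l.val < i) : vb n i l = Mc.z := if_neg h

lemma vd_eq_D {n i : ℕ} (l : Fin n) (h : l.val + 1 < i) : vd n i l = Mc.D := if_pos h

lemma vd_eq_p {n i : ℕ} (l : Fin n) (h1 : ¬ l.val + 1 < i) (h2 : l.val + 1 = i) :
    vd n i l = Mc.pD := by
  show (if l.val + 1 < i then Mc.D else if l.val + 1 = i then Mc.pD else Mc.z) = Mc.pD
  rw [if_neg h1, if_pos h2]

lemma vd_eq_z {n i : ℕ} (l : Fin n) (h1 : ¬ l.val + 1 < i) (h2 : ¬ l.val + 1 = i) :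
    vd n i l = Mc.z := by
  show (if l.val + 1 < i then Mc.D else if l.val + 1 = i then Mc.pD else Mc.z) = Mc.z
  rw [if_neg h1, if_neg h2]

/-- "Tail shape" predicate: any `∂D` entry is followed only by zeros. -/
abbrev Kp {n : ℕ} (x : Fin n → Mc) : Prop :=
  ∀ l m : Fin n, l.val < m.val → x l = Mc.pD → x m = Mc.z

lemma Bn_Kp {n : ℕ} {x : Fin n → Mc} (hx : Bn n x) : Kp x := by
  induction hx with
  | gen_a =>
    intro l m _ hp
    have hp' : vb n 1 l = Mc.pD := hp
    by_cases hc : l.val < 1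
    · rw [vb_eq_D l hc] at hp'; exact absurd hp' (by decide)
    · rw [vb_eq_z l hc] at hp'; exact absurd hp' (by decide)
  | gen_b i h2 hn =>
    intro l m _ hp
    by_cases hc : l.val < i
    · rw [vb_eq_D l hc] at hp; exact absurd hp (by decide)
    · rw [vb_eq_z l hc] at hp; exact absurd hp (by decide)
  | gen_d i h2 hn =>
    intro l m hlm hp
    by_cases hc : l.val + 1 < i
    · rw [vd_eq_D l hc] at hp; exact absurd hp (by decide)
    · by_cases hc2 : l.val + 1 = i
      · exact vd_eq_z m (by omega) (by omega)
      · rw [vd_eq_z l hc hc2] at hp; exact absurd hp (by decide)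
  | @cmt x y h1 h2 ih1 ih2 =>
    intro l m hlm hp
    have hp' : mmt (x l) (y l) = Mc.pD := hp
    have hxl : x l = Mc.pD := by
      rcases (Prange (x l) (y l) (y l)).1 with h | h
      · rw [h] at hp'; exact hp'
      · rw [h] at hp'; exact absurd hp' (by decide)
    have hxm := ih1 l m hlm hxl
    show mmt (x m) (y m) = Mc.z
    rw [hxm]; exact (Pz1 _ Mc.z).1
  | @cJ x y w h1 h2 h3 ih1 ih2 ih3 =>
    intro l m hlm hp
    have hp' : mJ (x l) (y l) (w l) = Mc.pD := hp
    have hxl : x l = Mc.pD := by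
      rcases (Prange (x l) (y l) (w l)).2.1 with h | h
      · rw [h] at hp'; exact hp'
      · rw [h] at hp'; exact absurd hp' (by decide)
    have hxm := ih1 l m hlm hxl
    show mJ (x m) (y m) (w m) = Mc.z
    rw [hxm]; exact (Pz1 _ _).2.1
  | @cJ' x y w h1 h2 h3 ih1 ih2 ih3 =>
    intro l m hlm hp
    have hp' : mJ' (x l) (y l) (w l) = Mc.pD := hp
    have hxl : x l = Mc.pD := by
      rcases (Prange (x l) (y l) (w l)).2.2 with h | h
      · rw [h] at hp'; exact hp'
      · rw [h] at hp'; exact absurd hp' (by decide)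
    have hxm := ih1 l m hlm hxl
    show mJ' (x m) (y m) (w m) = Mc.z
    rw [hxm]; exact (Pz1 _ _).2.2

lemma Bn_D0 {n : ℕ} {x : Fin n → Mc} (hx : Bn n x) : ∀ l : Fin n, l.val = 0 → x l = Mc.D := by
  induction hx with
  | gen_a => intro l hl; exact vb_eq_D l (by omega)
  | gen_b i h2 hn => intro l hl; exact vb_eq_D l (by omega)
  | gen_d i h2 hn => intro l hl; exact vd_eq_D l (by omega)
  | @cmt x y h1 h2 ih1 ih2 =>
    intro l hl
    show mmt (x l) (y l) = Mc.D
    rw [ih1 l hl, ih2 l hl]; decide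
  | @cJ x y w h1 h2 h3 ih1 ih2 ih3 =>
    intro l hl
    show mJ (x l) (y l) (w l) = Mc.D
    rw [ih1 l hl, ih2 l hl]
    exact (by decide : ∀ c, mJ Mc.D Mc.D c = Mc.D) _
  | @cJ' x y w h1 h2 h3 ih1 ih2 ih3 =>
    intro l hl
    show mJ' (x l) (y l) (w l) = Mc.D
    rw [ih1 l hl, ih2 l hl, ih3 l hl]; decide

/-- The inductive invariant for the congruence generated by `(a, 0)`. -/
abbrev CInv {n : ℕ} (i : ℕ) (e : Fin n → Mc) (u v : Fin n → Mc) : Prop :=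
  (∀ l : Fin n, l.val ≠ 0 → u l = v l) ∧
  (∀ l : Fin n, l.val = 0 → u l ≠ Mc.pD ∧ v l ≠ Mc.pD) ∧
  Kp u ∧ Kp v ∧ u ≠ e ∧ v ≠ e ∧
  (u = v ∨ ∃ l : Fin n, 1 ≤ l.val ∧ l.val < i ∧ u l = Mc.z)

lemma he_first {n : ℕ} (hn : 2 ≤ n) {i : ℕ} (h2i : 2 ≤ i) (hin : i ≤ n)
    {e : Fin n → Mc} (hei : (e = vb n n ∧ i = n) ∨ e = vd n i) :
    ∀ x o : Fin n → Mc, Kp x → (∀ l, o l = x l ∨ o l = Mc.z) → o = e → x = e := by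
  intro x o hKp hr heq
  subst heq
  rcases hei with ⟨hb, _⟩ | hd
  · subst hb
    funext l
    rcases hr l with h | h
    · rw [← h]
    · exfalso; rw [vb_eq_D l l.isLt] at h; exact absurd h (by decide)
  · subst hd
    funext l
    by_cases hc : l.val + 1 < i
    · rcases hr l with h | h
      · rw [← h]
      · exfalso; rw [vd_eq_D l hc] at h; exact absurd h (by decide)
    · by_cases hc2 : l.val + 1 = i
      · rcases hr l with h | h
        · rw [← h]
        · exfalso; rw [vd_eq_p l hc hc2] at h; exact absurd h (by decide)
      · obtain ⟨li, hvli⟩ : ∃ l : Fin n, l.val = i - 1 := ⟨⟨i - 1, by omega⟩, rfl⟩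
        have hxi : x li = Mc.pD := by
          rcases hr li with h | h
          · rw [← h]; exact vd_eq_p li (by omega) (by omega)
          · exfalso; rw [vd_eq_p li (by omega) (by omega)] at h; exact absurd h (by decide)
        have hz := hKp li l (by omega) hxi
        rw [hz]; exact (vd_eq_z l hc hc2).symm

lemma easy_parts {n : ℕ} {i : ℕ} {e : Fin n → Mc}
    (hef : ∀ x o : Fin n → Mc, Kp x → (∀ l, o l = x l ∨ o l = Mc.z) → o = e → x = e)
    (op : Mc → Mc → Mc → Mc)
    (hrange : ∀ a b c, op a b c = a ∨ op a b c = Mc.z)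
    (hzl : ∀ b c, op Mc.z b c = Mc.z)
    {x x' y y' w w' : Fin n → Mc}
    (Ix : CInv i e x x') (Iy : CInv i e y y') (Iw : CInv i e w w') :
    (∀ l : Fin n, l.val ≠ 0 → op (x l) (y l) (w l) = op (x' l) (y' l) (w' l)) ∧
    (∀ l : Fin n, l.val = 0 → op (x l) (y l) (w l) ≠ Mc.pD ∧ op (x' l) (y' l) (w' l) ≠ Mc.pD) ∧
    Kp (fun l => op (x l) (y l) (w l)) ∧ Kp (fun l => op (x' l) (y' l) (w' l)) ∧
    (fun l => op (x l) (y l) (w l)) ≠ e ∧ (fun l => op (x' l) (y' l) (w' l)) ≠ e := by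
  obtain ⟨xa, xb, xk, xk', xne, xne', -⟩ := Ix
  obtain ⟨ya, yb, yk, yk', yne, yne', -⟩ := Iy
  obtain ⟨wa, wb, wk, wk', wne, wne', -⟩ := Iw
  have pfirst : ∀ (u v t : Fin n → Mc) (l : Fin n), op (u l) (v l) (t l) = Mc.pD →
      u l = Mc.pD := by
    intro u v t l hp
    rcases hrange (u l) (v l) (t l) with h | h
    · rw [h] at hp; exact hp
    · rw [h] at hp; exact absurd hp (by decide)
  refine ⟨?_, ?_, ?_, ?_, ?_, ?_⟩
  · intro l hl; rw [xa l hl, ya l hl, wa l hl]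
  · intro l hl
    exact ⟨fun hp => (xb l hl).1 (pfirst x y w l hp),
           fun hp => (xb l hl).2 (pfirst x' y' w' l hp)⟩
  · intro l m hlm hp
    have hz := xk l m hlm (pfirst x y w l hp)
    show op (x m) (y m) (w m) = Mc.z
    rw [hz]; exact hzl _ _
  · intro l m hlm hp
    have hz := xk' l m hlm (pfirst x' y' w' l hp)
    show op (x' m) (y' m) (w' m) = Mc.z
    rw [hz]; exact hzl _ _
  · exact fun hq => xne (hef x _ xk (fun l => hrange (x l) (y l) (w l)) hq)
  · exact fun hq => xne' (hef x' _ xk' (fun l => hrange (x' l) (y' l) (w' l)) hq)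

lemma inv_main {n : ℕ} (hn : 2 ≤ n) (C : (Fin n → Mc) → Prop)
    (hsub : ∀ x, C x → Bn n x) (i : ℕ) (h2i : 2 ≤ i) (hin : i ≤ n)
    (e : Fin n → Mc) (he : ¬ C e)
    (hei : (e = vb n n ∧ i = n) ∨ e = vd n i) :
    ∀ u v, CgC C (va n) (vz n) u v → CInv i e u v := by
  have hef := he_first hn h2i hin hei
  intro u v h
  induction h with
  | base =>
    obtain ⟨l1, hv1⟩ : ∃ l : Fin n, l.val = 1 := ⟨⟨1, by omega⟩, rfl⟩
    obtain ⟨l0, hv0⟩ : ∃ l : Fin n, l.val = 0 := ⟨⟨0, by omega⟩, rfl⟩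
    refine ⟨?_, ?_, ?_, ?_, ?_, ?_, ?_⟩
    · intro l hl
      show vb n 1 l = vz n l
      rw [vb_eq_z l (by omega)]; rfl
    · intro l hl
      constructor
      · show vb n 1 l ≠ Mc.pD
        rw [vb_eq_D l (by omega)]; decide
      · exact fun hq => Mc.noConfusion hq
    · intro l m _ hp
      have hp' : vb n 1 l = Mc.pD := hp
      by_cases hc : l.val < 1
      · rw [vb_eq_D l hc] at hp'; exact absurd hp' (by decide)
      · rw [vb_eq_z l hc] at hp'; exact absurd hp' (by decide)
    · intro l m _ hp; exact Mc.noConfusion hp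
    · intro hq
      have h1 : vb n 1 l1 = e l1 := congrFun hq l1
      rw [vb_eq_z l1 (by omega)] at h1
      rcases hei with ⟨hb, _⟩ | hd
      · rw [hb, vb_eq_D l1 (by omega)] at h1; exact absurd h1 (by decide)
      · subst hd
        by_cases hc : l1.val + 1 < i
        · rw [vd_eq_D l1 hc] at h1; exact absurd h1 (by decide)
        · rw [vd_eq_p l1 hc (by omega)] at h1; exact absurd h1 (by decide)
    · intro hq
      have h1 : vz n l0 = e l0 := congrFun hq l0
      rcases hei with ⟨hb, _⟩ | hd
      · rw [hb, vb_eq_D l0 (by omega)] at h1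
        exact absurd (show Mc.z = Mc.D from h1) (by decide)
      · rw [hd, vd_eq_D l0 (by omega)] at h1
        exact absurd (show Mc.z = Mc.D from h1) (by decide)
    · exact Or.inr ⟨l1, by omega, by omega, vb_eq_z l1 (by omega)⟩
  | refl hx =>
    have hB := hsub _ hx
    have hD := Bn_D0 hB
    refine ⟨fun l _ => rfl, fun l hl => ⟨?_, ?_⟩, Bn_Kp hB, Bn_Kp hB, ?_, ?_, Or.inl rfl⟩
    · rw [hD l hl]; decide
    · rw [hD l hl]; decide
    · rintro rfl; exact he hx
    · rintro rfl; exact he hx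
  | symm h ih =>
    obtain ⟨c1, c2, c3, c4, c5, c6, c7⟩ := ih
    refine ⟨fun l hl => (c1 l hl).symm, fun l hl => ⟨(c2 l hl).2, (c2 l hl).1⟩,
      c4, c3, c6, c5, ?_⟩
    rcases c7 with h' | ⟨l, h1, h2, h3⟩
    · exact Or.inl h'.symm
    · exact Or.inr ⟨l, h1, h2, by rw [← c1 l (by omega)]; exact h3⟩
  | trans h1 h2 ih1 ih2 =>
    obtain ⟨c1, c2, c3, c4, c5, c6, c7⟩ := ih1
    obtain ⟨d1, d2, d3, d4, d5, d6, d7⟩ := ih2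
    refine ⟨fun l hl => (c1 l hl).trans (d1 l hl), fun l hl => ⟨(c2 l hl).1, (d2 l hl).2⟩,
      c3, d4, c5, d6, ?_⟩
    rcases c7 with h' | ⟨l, e1, e2, e3⟩
    · rcases d7 with h'' | ⟨l, e1, e2, e3⟩
      · exact Or.inl (h'.trans h'')
      · exact Or.inr ⟨l, e1, e2, by rw [h']; exact e3⟩
    · exact Or.inr ⟨l, e1, e2, e3⟩
  | @cmt x x' y y' hx hy ihx ihy =>
    have E := easy_parts hef (fun a b _ => mmt a b)
      (fun a b c => (Prange a b c).1) (fun b c => (Pz1 b c).1) ihx ihy ihx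
    refine ⟨E.1, E.2.1, E.2.2.1, E.2.2.2.1, E.2.2.2.2.1, E.2.2.2.2.2, ?_⟩
    by_cases hxx : x = x'
    · by_cases hyy : y = y'
      · exact Or.inl (by rw [hxx, hyy])
      · rcases ihy.2.2.2.2.2.2 with h | ⟨l, h1, h2, h3⟩
        · exact absurd h hyy
        · refine Or.inr ⟨l, h1, h2, ?_⟩
          show mmt (x l) (y l) = Mc.z
          rw [h3]; exact (Pz2 _ Mc.z).1
    · rcases ihx.2.2.2.2.2.2 with h | ⟨l, h1, h2, h3⟩
      · exact absurd h hxx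
      · refine Or.inr ⟨l, h1, h2, ?_⟩
        show mmt (x l) (y l) = Mc.z
        rw [h3]; exact (Pz1 _ Mc.z).1
  | @cJ x x' y y' w w' hx hy hw ihx ihy ihw =>
    have E := easy_parts hef mJ
      (fun a b c => (Prange a b c).2.1) (fun b c => (Pz1 b c).2.1) ihx ihy ihw
    refine ⟨E.1, E.2.1, E.2.2.1, E.2.2.2.1, E.2.2.2.2.1, E.2.2.2.2.2, ?_⟩
    by_cases hxx : x = x'
    · by_cases hyy : y = y'
      · subst hxx; subst hyy
        left
        funext l
        by_cases hl : l.val = 0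
        · exact PJw _ _ _ _ (ihx.2.1 l hl).1 (ihy.2.1 l hl).1
        · show mJ (x l) (y l) (w l) = mJ (x l) (y l) (w' l)
          rw [ihw.1 l hl]
      · rcases ihy.2.2.2.2.2.2 with h | ⟨l, h1, h2, h3⟩
        · exact absurd h hyy
        · refine Or.inr ⟨l, h1, h2, ?_⟩
          show mJ (x l) (y l) (w l) = Mc.z
          rw [h3]; exact (Pz2 _ _).2.1
    · rcases ihx.2.2.2.2.2.2 with h | ⟨l, h1, h2, h3⟩
      · exact absurd h hxx
      · refine Or.inr ⟨l, h1, h2, ?_⟩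
        show mJ (x l) (y l) (w l) = Mc.z
        rw [h3]; exact (Pz1 _ _).2.1
  | @cJ' x x' y y' w w' hx hy hw ihx ihy ihw =>
    have E := easy_parts hef mJ'
      (fun a b c => (Prange a b c).2.2) (fun b c => (Pz1 b c).2.2) ihx ihy ihw
    refine ⟨E.1, E.2.1, E.2.2.1, E.2.2.2.1, E.2.2.2.2.1, E.2.2.2.2.2, ?_⟩
    by_cases hxx : x = x'
    case neg =>
      rcases ihx.2.2.2.2.2.2 with h | ⟨l, h1, h2, h3⟩
      · exact absurd h hxx
      · refine Or.inr ⟨l, h1, h2, ?_⟩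
        show mJ' (x l) (y l) (w l) = Mc.z
        rw [h3]; exact (Pz1 _ _).2.2
    case pos =>
    by_cases hyy : y = y'
    case neg =>
      rcases ihy.2.2.2.2.2.2 with h | ⟨l, h1, h2, h3⟩
      · exact absurd h hyy
      · refine Or.inr ⟨l, h1, h2, ?_⟩
        show mJ' (x l) (y l) (w l) = Mc.z
        rw [h3]; exact (Pz2 _ _).2.2
    case pos =>
    subst hxx; subst hyy
    by_cases heq : vJ' x y w = vJ' x y w'
    · exact Or.inl heq
    right
    have hww : w ≠ w' := by rintro rfl; exact heq rfl
    obtain ⟨lw, hlw1, hlwi, hwz⟩ : ∃ l : Fin n, 1 ≤ l.val ∧ l.val < i ∧ w l = Mc.z := by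
      rcases ihw.2.2.2.2.2.2 with h | h
      · exact absurd h hww
      · exact h
    have h00 : ∀ l : Fin n, l.val = 0 → x l = Mc.D ∧ y l = Mc.D := by
      intro l hl
      have hne : mJ' (x l) (y l) (w l) ≠ mJ' (x l) (y l) (w' l) := by
        intro hq
        apply heq
        funext m
        by_cases hm : m.val = 0
        · have hml : m = l := Fin.ext (by omega)
          rw [hml]; exact hq
        · show mJ' (x m) (y m) (w m) = mJ' (x m) (y m) (w' m)
          rw [ihw.1 m hm]
      exact PJ'0 _ _ _ _ (ihx.2.1 l hl).1 (ihy.2.1 l hl).1 hne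
    by_contra hnw
    push_neg at hnw
    have holw : mJ' (x lw) (y lw) Mc.z ≠ Mc.z := by
      have h0 := hnw lw hlw1 hlwi
      rw [show vJ' x y w lw = mJ' (x lw) (y lw) (w lw) from rfl, hwz] at h0
      exact h0
    have kx : Kp x := ihx.2.2.1
    have ky : Kp y := ihy.2.2.1
    rcases PJ'w _ _ holw with ⟨hxD, hyp⟩ | ⟨hxp, hyD⟩
    · -- y lw = ∂D
      by_cases hlt : lw.val + 1 < i
      · obtain ⟨m1, hvm1⟩ : ∃ m : Fin n, m.val = lw.val + 1 := ⟨⟨lw.val + 1, by omega⟩, rfl⟩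
        have hym : y m1 = Mc.z := ky lw m1 (by omega) hyp
        refine hnw m1 (by omega) (by omega) ?_
        show mJ' (x m1) (y m1) (w m1) = Mc.z
        rw [hym]; exact (Pz2 _ _).2.2
      · have hlwe : lw.val + 1 = i := by omega
        have hyd : y = vd n i := by
          funext l
          rcases Nat.lt_trichotomy l.val lw.val with hc | hc | hc
          · by_cases hl0 : l.val = 0
            · rw [(h00 l hl0).2]; exact (vd_eq_D l (by omega)).symm
            · have hnz := hnw l (by omega) (by omega)
              have h1 : y l ≠ Mc.z := by
                intro hq
                exact hnz (by show mJ' (x l) (y l) (w l) = Mc.z; rw [hq]; exact (Pz2 _ _).2.2)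
              have h2 : y l ≠ Mc.pD := by
                intro hq
                have hz := ky l lw hc hq
                rw [hyp] at hz; exact absurd hz (by decide)
              have h3 : y l = Mc.D := by
                cases hq : y l
                · exact absurd hq h1
                · rfl
                · exact absurd hq h2
              rw [h3]; exact (vd_eq_D l (by omega)).symm
          · rw [Fin.ext hc, hyp]; exact (vd_eq_p lw (by omega) (by omega)).symm
          · have hz := ky lw l hc hyp
            rw [hz]; exact (vd_eq_z l (by omega) (by omega)).symm
        rcases hei with ⟨hb, hni⟩ | hd
        · subst hb
          have hxb : x = vb n n := by
            funext l
            rcases Nat.lt_trichotomy l.val lw.val with hc | hc | hc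
            · by_cases hl0 : l.val = 0
              · rw [(h00 l hl0).1]; exact (vb_eq_D l l.isLt).symm
              · have hnz := hnw l (by omega) (by have := l.isLt; omega)
                have h1 : x l ≠ Mc.z := by
                  intro hq
                  exact hnz (by show mJ' (x l) (y l) (w l) = Mc.z; rw [hq]; exact (Pz1 _ _).2.2)
                have h2 : x l ≠ Mc.pD := by
                  intro hq
                  have hz := kx l lw hc hq
                  rw [hxD] at hz; exact absurd hz (by decide)
                have h3 : x l = Mc.D := by
                  cases hq : x l
                  · exact absurd hq h1
                  · rfl
                  · exact absurd hq h2
                rw [h3]; exact (vb_eq_D l l.isLt).symm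
            · rw [Fin.ext hc, hxD]; exact (vb_eq_D lw lw.isLt).symm
            · exfalso; have := l.isLt; omega
          exact ihx.2.2.2.2.1 hxb
        · exact absurd (show y = e by rw [hd]; exact hyd) ihy.2.2.2.2.1
    · -- x lw = ∂D
      by_cases hlt : lw.val + 1 < i
      · obtain ⟨m1, hvm1⟩ : ∃ m : Fin n, m.val = lw.val + 1 := ⟨⟨lw.val + 1, by omega⟩, rfl⟩
        have hxm : x m1 = Mc.z := kx lw m1 (by omega) hxp
        refine hnw m1 (by omega) (by omega) ?_
        show mJ' (x m1) (y m1) (w m1) = Mc.z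
        rw [hxm]; exact (Pz1 _ _).2.2
      · have hlwe : lw.val + 1 = i := by omega
        have hxd : x = vd n i := by
          funext l
          rcases Nat.lt_trichotomy l.val lw.val with hc | hc | hc
          · by_cases hl0 : l.val = 0
            · rw [(h00 l hl0).1]; exact (vd_eq_D l (by omega)).symm
            · have hnz := hnw l (by omega) (by omega)
              have h1 : x l ≠ Mc.z := by
                intro hq
                exact hnz (by show mJ' (x l) (y l) (w l) = Mc.z; rw [hq]; exact (Pz1 _ _).2.2)
              have h2 : x l ≠ Mc.pD := by
                intro hq
                have hz := kx l lw hc hq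
                rw [hxp] at hz; exact absurd hz (by decide)
              have h3 : x l = Mc.D := by
                cases hq : x l
                · exact absurd hq h1
                · rfl
                · exact absurd hq h2
              rw [h3]; exact (vd_eq_D l (by omega)).symm
          · rw [Fin.ext hc, hxp]; exact (vd_eq_p lw (by omega) (by omega)).symm
          · have hz := kx lw l hc hxp
            rw [hz]; exact (vd_eq_z l (by omega) (by omega)).symm
        rcases hei with ⟨hb, hni⟩ | hd
        · subst hb
          have hyb : y = vb n n := by
            funext l
            rcases Nat.lt_trichotomy l.val lw.val with hc | hc | hc
            · by_cases hl0 : l.val = 0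
              · rw [(h00 l hl0).2]; exact (vb_eq_D l l.isLt).symm
              · have hnz := hnw l (by omega) (by have := l.isLt; omega)
                have h1 : y l ≠ Mc.z := by
                  intro hq
                  exact hnz (by show mJ' (x l) (y l) (w l) = Mc.z; rw [hq]; exact (Pz2 _ _).2.2)
                have h2 : y l ≠ Mc.pD := by
                  intro hq
                  have hz := ky l lw hc hq
                  rw [hyD] at hz; exact absurd hz (by decide)
                have h3 : y l = Mc.D := by
                  cases hq : y l
                  · exact absurd hq h1
                  · rfl
                  · exact absurd hq h2
                rw [h3]; exact (vb_eq_D l l.isLt).symm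
            · rw [Fin.ext hc, hyD]; exact (vb_eq_D lw lw.isLt).symm
            · exfalso; have := l.isLt; omega
          exact ihy.2.2.2.2.1 hyb
        · exact absurd (show x = e by rw [hd]; exact hxd) ihx.2.2.2.2.1

lemma hmeet {n : ℕ} (j : ℕ) (hj : j < n) : vmt (vd n (j+1)) (vb n n) = vb n j := by
  funext l
  show mmt (vd n (j+1) l) (vb n n l) = vb n j l
  rw [vb_eq_D l l.isLt]
  rcases Nat.lt_trichotomy l.val j with h | h | h
  · rw [vd_eq_D l (by omega), vb_eq_D l h]; decide
  · rw [vd_eq_p l (by omega) (by omega), vb_eq_z l (by omega)]; decide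
  · rw [vd_eq_z l (by omega) (by omega), vb_eq_z l (by omega)]; decide

lemma gen_all {n : ℕ} (hn : 2 ≤ n) (C : (Fin n → Mc) → Prop)
    (hCmt : ∀ x y, C x → C y → C (vmt x y))
    (hCJ : ∀ x y w, C x → C y → C w → C (vJ x y w))
    (hCJ' : ∀ x y w, C x → C y → C w → C (vJ' x y w))
    (hb : C (vb n n)) (hd : ∀ i, 2 ≤ i → i ≤ n → C (vd n i)) :
    ∀ x, Bn n x → C x := by
  have hbj : ∀ j, 1 ≤ j → j ≤ n → C (vb n j) := by
    intro j h1 h2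
    rcases eq_or_lt_of_le h2 with rfl | hlt
    · exact hb
    · rw [← hmeet j hlt]
      exact hCmt _ _ (hd (j+1) (by omega) (by omega)) hb
  intro x hx
  induction hx with
  | gen_a => exact hbj 1 le_rfl (by omega)
  | gen_b i h2 hn' => exact hbj i (by omega) hn'
  | gen_d i h2 hn' => exact hd i h2 hn'
  | cmt h1 h2 ih1 ih2 => exact hCmt _ _ ih1 ih2
  | cJ h1 h2 h3 ih1 ih2 ih3 => exact hCJ _ _ _ ih1 ih2 ih3
  | cJ' h1 h2 h3 ih1 ih2 ih3 => exact hCJ' _ _ _ ih1 ih2 ih3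

lemma poly_cg {n : ℕ} (C : (Fin n → Mc) → Prop) {f : (Fin n → Mc) → (Fin n → Mc)}
    (hf : PolyC C f) : CgC C (va n) (vz n) (f (va n)) (f (vz n)) := by
  induction hf with
  | id => exact CgC.base
  | const h => exact CgC.refl h
  | pmt hf hg ihf ihg => exact CgC.cmt ihf ihg
  | pJ hf hg hh ihf ihg ihh => exact CgC.cJ ihf ihg ihh
  | pJ' hf hg hh ihf ihg ihh => exact CgC.cJ' ihf ihg ihh

end Aux

/-- Let `C` be a proper subalgebra of `B_n`. Then every unary polynomial `f` of `C` with
`f(a) ≠ f(0)` has `f(a)(l) = 0` for some coordinate `l`; consequently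
`(b_n, c_n) ∉ Cg^C(a, 0)`. -/
theorem proper_subalgebra_no_witness {n : ℕ} (hn : 2 ≤ n) (C : (Fin n → Mc) → Prop)
    (hsub : ∀ x, C x → Bn n x)
    (hCmt : ∀ x y, C x → C y → C (vmt x y))
    (hCJ : ∀ x y w, C x → C y → C w → C (vJ x y w))
    (hCJ' : ∀ x y w, C x → C y → C w → C (vJ' x y w))
    (hproper : ∃ x, Bn n x ∧ ¬ C x) :
    (∀ f : (Fin n → Mc) → (Fin n → Mc), PolyC C f → f (va n) ≠ f (vz n) →
      ∃ l : Fin n, f (va n) l = Mc.z) ∧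
    ¬ CgC C (va n) (vz n) (vb n n) (vc n n) := by
  have hmiss : ¬ C (vb n n) ∨ ∃ i, 2 ≤ i ∧ i ≤ n ∧ ¬ C (vd n i) := by
    by_contra hq
    push_neg at hq
    obtain ⟨x, hBx, hCx⟩ := hproper
    exact hCx (gen_all hn C hCmt hCJ hCJ' hq.1 (fun i h2 hi => hq.2 i h2 hi) x hBx)
  obtain ⟨i, h2i, hin, e, he, hei⟩ :
      ∃ i, 2 ≤ i ∧ i ≤ n ∧ ∃ e, ¬ C e ∧ ((e = vb n n ∧ i = n) ∨ e = vd n i) := by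
    rcases hmiss with h | ⟨i, h2, hi, h⟩
    · exact ⟨n, hn, le_rfl, vb n n, h, Or.inl ⟨rfl, rfl⟩⟩
    · exact ⟨i, h2, hi, vd n i, h, Or.inr rfl⟩
  have hinv := inv_main hn C hsub i h2i hin e he hei
  constructor
  · intro f hf hne
    have H := hinv _ _ (poly_cg C hf)
    rcases H.2.2.2.2.2.2 with h | ⟨l, _, _, hz⟩
    · exact absurd h hne
    · exact ⟨l, hz⟩
  · intro hcg
    have H := hinv _ _ hcg
    rcases H.2.2.2.2.2.2 with h | ⟨l, h1, h2, hz⟩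
    · obtain ⟨l0, hv0⟩ : ∃ l : Fin n, l.val = 0 := ⟨⟨0, by omega⟩, rfl⟩
      have hc := congrFun h l0
      rw [vb_eq_D l0 (by omega)] at hc
      have hc0 : vc n n l0 = Mc.z := by
        show (if l0.val = 0 then Mc.z else if l0.val < n then Mc.D else Mc.z) = Mc.z
        rw [if_pos hv0]
      rw [hc0] at hc
      exact absurd hc (by decide)
    · rw [vb_eq_D l l.isLt] at hz
      exact absurd hz (by decide)
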